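/- arXiv:1605.00668 — 2 statements merged into one kernel-verified Lean document; each statement's English description precedes it below -/
import Mathlib

section
/- Fix a positive integer N and a real ν > 0. As ρ → 0⁺, the one-bit upper bound satisfies 2N(1 − H_b(Q(√(ρν²/N)))) = (2/π)·(ρν²/ln 2) + o(ρ). -/
open MeasureTheory Filter Asymptotics

/-- The standard normal tail function `Q(t) = ∫ₜ^∞ (1/√(2π)) e^{-u²/2} du`. -/
noncomputable def Qfun (t : ℝ) : ℝ :=
  ∫ u in Set.Ioi t, (Real.sqrt (2 * Real.pi))⁻¹ * Real.exp (-(u ^ 2) / 2)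

/-- The binary entropy function `H_b(p) = -p log₂ p - (1-p) log₂ (1-p)`. -/
noncomputable def binEnt (p : ℝ) : ℝ :=
  -(p * Real.logb 2 p) - (1 - p) * Real.logb 2 (1 - p)

/-!
Near `t = 0` the tail is linear, `Q(t) - 1/2 ~ -t/√(2π)`, while the binary entropy is flat to
second order at its maximum, `1 - H_b(p) ~ (2 / ln 2)(p - 1/2)²`. Composing the two gives
`1 - H_b(Q(t)) ~ t² / (π ln 2)`, and with `t² = ρν²/N` the difference in the claim is
`2N · o(ρν²/N) = o(ρ)`.
-/

open Topology ProbabilityTheory Real Set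

theorem HasDerivAt.isEquivalent_sub {f : ℝ → ℝ} {f' a : ℝ} (hf : HasDerivAt f f' a)
    (hf' : f' ≠ 0) : (fun x => f x - f a) ~[𝓝 a] fun x => f' * (x - a) := by
  have h := (hasDerivAt_iff_isLittleO.mp hf).trans_isBigO
    (isBigO_self_const_mul hf' (fun x => x - a) (𝓝 a))
  simpa only [IsEquivalent, Pi.sub_def, smul_eq_mul, mul_comm] using h

theorem isLittleO_sub_mul_sq_of_hasDerivAt {f f' : ℝ → ℝ} {a c : ℝ}
    (hf : ∀ᶠ x in 𝓝 a, HasDerivAt f (f' x) x) (hfa : f a = 0) (hf'a : f' a = 0)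
    (hf' : HasDerivAt f' (2 * c) a) :
    (fun x => f x - c * (x - a) ^ 2) =o[𝓝 a] fun x => (x - a) ^ 2 := by
  have hslope : Tendsto (fun x => f' x / (2 * (x - a))) (𝓝[≠] a) (𝓝 c) := by
    have := (hasDerivAt_iff_tendsto_slope.mp hf').div_const 2
    rw [mul_div_cancel_left₀ c two_ne_zero] at this
    refine this.congr fun x => ?_
    rw [slope_def_field, hf'a, sub_zero, div_div, mul_comm]
  have hratio : Tendsto (fun x => f x / (x - a) ^ 2) (𝓝[≠] a) (𝓝 c) := by
    refine HasDerivAt.lhopital_zero_nhdsNE (nhdsWithin_le_nhds hf) ?_ ?_ ?_ ?_ hslope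
    · exact Eventually.of_forall fun x => by
        simpa using ((hasDerivAt_id x).sub_const a).fun_pow 2
    · filter_upwards [self_mem_nhdsWithin] with x hx
      exact mul_ne_zero two_ne_zero (sub_ne_zero.mpr hx)
    · simpa [hfa] using hf.self_of_nhds.continuousAt.tendsto.mono_left nhdsWithin_le_nhds
    · refine tendsto_nhdsWithin_of_tendsto_nhds ?_
      exact (by fun_prop : Continuous fun x => (x - a) ^ 2).tendsto' a 0 (by simp)
  have hsmall : (fun x => f x - c * (x - a) ^ 2) =o[𝓝[≠] a] fun x => (x - a) ^ 2 := by
    refine (isLittleO_iff_tendsto' ?_).mpr ?_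
    · filter_upwards [self_mem_nhdsWithin] with x hx h
      exact absurd (pow_eq_zero_iff two_ne_zero |>.mp h) (sub_ne_zero.mpr hx)
    · refine (hratio.sub_const c).congr' ?_ |>.trans (by rw [sub_self])
      filter_upwards [self_mem_nhdsWithin] with x hx
      field_simp [sub_ne_zero.mpr hx]
  -- at `a` itself both sides vanish, so the punctured neighbourhood suffices
  rw [← nhdsWithin_univ, show (univ : Set ℝ) = insert a {a}ᶜ by ext; simp [em],
    isLittleO_insert (by simp [hfa])]
  exact hsmall

theorem Qfun_eq_integral_gaussianPDFReal (t : ℝ) :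
    Qfun t = ∫ u in Ioi t, gaussianPDFReal 0 1 u := by
  simp [Qfun, gaussianPDFReal, div_eq_mul_inv]

theorem Qfun_zero : Qfun 0 = 1 / 2 := by
  have h := integral_gaussian_Ioi (1 / 2)
  rw [show π / (1 / 2) = 2 * π by ring] at h
  simp_rw [Qfun, integral_const_mul, neg_div, div_eq_mul_inv, neg_mul, one_mul] at h ⊢
  simp_rw [mul_comm _ (2⁻¹ : ℝ), h]
  field_simp

theorem hasDerivAt_Qfun (t : ℝ) : HasDerivAt Qfun (-gaussianPDFReal 0 1 t) t := by
  have hcont : Continuous (gaussianPDFReal 0 1) := by unfold gaussianPDFReal; fun_prop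
  have hQ : Qfun = fun s => Qfun 0 - ∫ u in (0 : ℝ)..s, gaussianPDFReal 0 1 u := by
    ext s
    simp only [Qfun_eq_integral_gaussianPDFReal]
    rw [← intervalIntegral.integral_Ioi_sub_Ioi' (integrable_gaussianPDFReal 0 1).integrableOn
      (integrable_gaussianPDFReal 0 1).integrableOn, sub_sub_cancel]
  rw [hQ]
  simpa using (hcont.integral_hasStrictDerivAt 0 t).hasDerivAt.const_sub (Qfun 0)

theorem isEquivalent_Qfun_sub_half :
    (fun t => Qfun t - 1 / 2) ~[𝓝 0] fun t => -(√(2 * π))⁻¹ * t := by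
  have hpdf : gaussianPDFReal 0 1 0 = (√(2 * π))⁻¹ := by simp [gaussianPDFReal]
  have h := (hasDerivAt_Qfun 0).isEquivalent_sub (by rw [hpdf, neg_ne_zero]; positivity)
  simpa only [Qfun_zero, hpdf, sub_zero] using h

theorem binEnt_eq_binEntropy_div (p : ℝ) : binEnt p = binEntropy p / log 2 := by
  simp only [binEnt, binEntropy, log_inv, logb]
  ring

theorem isEquivalent_one_sub_binEnt :
    (fun p => 1 - binEnt p) ~[𝓝 (1 / 2)] fun p => 2 / log 2 * (p - 1 / 2) ^ 2 := by
  have hlog2 : log 2 ≠ 0 := (log_pos one_lt_two).ne'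
  have hderiv : ∀ᶠ p in 𝓝 (1 / 2 : ℝ),
      HasDerivAt (fun p => 1 - binEnt p) ((log p - log (1 - p)) / log 2) p := by
    filter_upwards [Ioo_mem_nhds (by norm_num : (0 : ℝ) < 1 / 2) (by norm_num : (1 / 2 : ℝ) < 1)]
      with p hp
    simp_rw [binEnt_eq_binEntropy_div]
    refine ((hasDerivAt_binEntropy hp.1.ne' (by linarith [hp.2])).div_const _).const_sub 1
      |>.congr_deriv ?_
    ring
  have hderiv2 :
      HasDerivAt (fun p => (log p - log (1 - p)) / log 2) (2 * (2 / log 2)) (1 / 2) := by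
    have h := ((hasDerivAt_log (x := 1 / 2) (by norm_num)).sub
      ((hasDerivAt_log (x := 1 - 1 / 2) (by norm_num)).comp _
        ((hasDerivAt_id _).const_sub 1))).div_const (log 2)
    refine h.congr_deriv ?_
    norm_num
    ring
  refine IsLittleO.isEquivalent <|
    (isLittleO_sub_mul_sq_of_hasDerivAt hderiv ?_ ?_ hderiv2).trans_isBigO
      (isBigO_self_const_mul (by positivity) _ _)
  · simp [binEnt_eq_binEntropy_div, hlog2]
  · norm_num

theorem isEquivalent_one_sub_binEnt_Qfun :
    (fun t => 1 - binEnt (Qfun t)) ~[𝓝 0] fun t => t ^ 2 / (π * log 2) := by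
  have hQ : Tendsto Qfun (𝓝 0) (𝓝 (1 / 2)) :=
    Qfun_zero ▸ (hasDerivAt_Qfun 0).continuousAt.tendsto
  refine ((isEquivalent_one_sub_binEnt.comp_tendsto hQ).trans
    (IsEquivalent.refl.mul (isEquivalent_Qfun_sub_half.pow 2))).congr_right
    (Eventually.of_forall fun t => ?_)
  simp only [Pi.mul_apply, Pi.pow_apply, mul_pow, neg_sq, inv_pow,
    sq_sqrt (by positivity : (0 : ℝ) ≤ 2 * π)]
  field_simp

theorem oneBit_ub_low_SNR_general (N : ℕ) (hN : 0 < N) (ν : ℝ) :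
    (fun ρ : ℝ =>
        2 * N * (1 - binEnt (Qfun (Real.sqrt (ρ * ν ^ 2 / N)))) -
          2 / Real.pi * (ρ * ν ^ 2 / Real.log 2))
      =o[nhdsWithin 0 (Set.Ioi 0)] (fun ρ : ℝ => ρ) := by
  have hN' : (N : ℝ) ≠ 0 := by positivity
  have hsqrt : Tendsto (fun ρ : ℝ => √(ρ * ν ^ 2 / N)) (𝓝[>] 0) (𝓝 0) := by
    have : Continuous fun ρ : ℝ => √(ρ * ν ^ 2 / N) := by fun_prop
    simpa using this.tendsto' 0 _ rfl |>.mono_left nhdsWithin_le_nhds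
  have hF : (fun ρ => 1 - binEnt (Qfun √(ρ * ν ^ 2 / N))) ~[𝓝[>] 0]
      fun ρ => ν ^ 2 / (N * π * log 2) * ρ := by
    refine (isEquivalent_one_sub_binEnt_Qfun.comp_tendsto hsqrt).congr_right ?_
    filter_upwards [self_mem_nhdsWithin] with ρ (hρ : 0 < ρ)
    rw [Function.comp_apply, sq_sqrt (by positivity)]
    field_simp
  refine (hF.isLittleO.trans_isBigO (isBigO_const_mul_self _ _ _)).const_mul_left (2 * N)
    |>.congr' (Eventually.of_forall fun ρ => ?_) EventuallyEq.rfl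
  simp only [Pi.sub_apply]
  field_simp

/-- As `ρ → 0⁺`, the one-bit upper bound satisfies
`2N(1 - H_b(Q(√(ρν²/N)))) = (2/π)·(ρν²/ln 2) + o(ρ)`. -/
theorem oneBit_ub_low_SNR (N : ℕ) (hN : 0 < N) (ν : ℝ) (hν : 0 < ν) :
    (fun ρ : ℝ =>
        2 * N * (1 - binEnt (Qfun (Real.sqrt (ρ * ν ^ 2 / N)))) -
          2 / Real.pi * (ρ * ν ^ 2 / Real.log 2))
      =o[nhdsWithin 0 (Set.Ioi 0)] (fun ρ : ℝ => ρ) :=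
  oneBit_ub_low_SNR_general N hN ν
end

section
/- AQNM high-SNR bound: Let à be a complex n × m matrix each of whose rows has unit Euclidean norm, and let 0 < η < 1. Then log₂ det(I_m + ((1−η)/η)·Ãᴴà ) ≤ n log₂(1/η). -/
/-!
By Sylvester's determinant identity, `det (1 + c • Aᴴ * A) = det (1 + c • A * Aᴴ)`, and
diagonalising the `n × n` Hermitian matrix `A * Aᴴ` turns this into `∏ i, (1 + c * μ i)` over its
eigenvalues `μ i ≥ 0`. Their sum is the trace `∑ i, ∑ j, ‖A i j‖ ^ 2 = n`, so AM–GM bounds the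
product by `(1 + c) ^ n`, and `1 + c = 1 / η` for `c = (1 - η) / η`.
-/

open Finset Matrix

theorem Real.prod_le_pow_card_of_sum_le {ι : Type*} {s : Finset ι} {z : ι → ℝ} {a : ℝ}
    (hz : ∀ i ∈ s, 0 ≤ z i) (hsum : ∑ i ∈ s, z i ≤ #s * a) : ∏ i ∈ s, z i ≤ a ^ #s := by
  rcases s.eq_empty_or_nonempty with rfl | hs
  · simp
  have hcard : (0 : ℝ) < #s := by exact_mod_cast hs.card_pos
  have hprod : 0 ≤ ∏ i ∈ s, z i := prod_nonneg hz
  have hamgm : (∏ i ∈ s, z i) ^ (#s : ℝ)⁻¹ ≤ a := by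
    have := Real.geom_mean_le_arith_mean s (fun _ ↦ 1) z (fun _ _ ↦ zero_le_one)
      (by simpa using hs.card_pos) hz
    simp only [Real.rpow_one, one_mul, sum_const, nsmul_eq_mul, mul_one] at this
    exact this.trans ((div_le_iff₀' hcard).2 hsum)
  calc ∏ i ∈ s, z i = ((∏ i ∈ s, z i) ^ (#s : ℝ)⁻¹) ^ #s := by
        rw [← Real.rpow_natCast, ← Real.rpow_mul hprod, inv_mul_cancel₀ hcard.ne', Real.rpow_one]
    _ ≤ a ^ #s := pow_le_pow_left₀ (by positivity) hamgm _

namespace Matrix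

variable {𝕜 : Type*} [RCLike 𝕜] {m n : Type*} [Fintype m] [Fintype n]

theorem IsHermitian.det_one_add_smul [DecidableEq n] {B : Matrix n n 𝕜} (hB : B.IsHermitian)
    (c : ℝ) : (1 + (c : 𝕜) • B).det = ((∏ i, (1 + c * hB.eigenvalues i) : ℝ) : 𝕜) := by
  conv_lhs => rw [hB.spectral_theorem,
    ← map_one (Unitary.conjStarAlgAut 𝕜 _ hB.eigenvectorUnitary), ← map_smul, ← map_add,
    Unitary.conjStarAlgAut_apply,
    det_conj_of_mul_eq_one (Unitary.coe_mul_star_self _) (Unitary.coe_star_mul_self _)]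
  rw [← diagonal_one, ← diagonal_smul, diagonal_add, det_diagonal]
  simp

theorem sum_eigenvalues_mul_conjTranspose_self [DecidableEq m] (A : Matrix m n 𝕜) :
    ∑ i, (isHermitian_mul_conjTranspose_self A).eigenvalues i = ∑ i, ∑ j, ‖A i j‖ ^ 2 := by
  have := (isHermitian_mul_conjTranspose_self A).trace_eq_sum_eigenvalues
  simp only [trace, diag_apply, mul_apply, conjTranspose_apply, RCLike.star_def,
    RCLike.mul_conj] at this
  exact_mod_cast this.symm

theorem det_one_add_smul_conjTranspose_mul_self [DecidableEq m] [DecidableEq n]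
    (A : Matrix m n 𝕜) (c : ℝ) :
    (1 + (c : 𝕜) • (Aᴴ * A)).det =
      ((∏ i, (1 + c * (isHermitian_mul_conjTranspose_self A).eigenvalues i) : ℝ) : 𝕜) := by
  rw [← smul_mul, det_one_add_mul_comm, Matrix.mul_smul,
    (isHermitian_mul_conjTranspose_self A).det_one_add_smul]

end Matrix

/-- AQNM high-SNR bound: if every row of the complex `n × m` matrix `Ã` has unit
Euclidean norm and `0 < η < 1`, then
`log₂ det(I + ((1−η)/η)·Ãᴴ Ã) ≤ n log₂(1/η)`.  (The determinant of `I` plus a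
positive semidefinite matrix is real, so its real part is taken.) -/
theorem aqnm_high_snr_bound {n m : ℕ} (A : Matrix (Fin n) (Fin m) ℂ)
    (hrows : ∀ i, ∑ j, Complex.normSq (A i j) = 1)
    (η : ℝ) (hη0 : 0 < η) (hη1 : η < 1) :
    Real.logb 2 ((1 + (((1 - η) / η : ℝ) : ℂ) • (Aᴴ * A)).det.re) ≤
      n * Real.logb 2 (1 / η) := by
  set c := (1 - η) / η
  set μ := (isHermitian_mul_conjTranspose_self A).eigenvalues
  have hc : 0 ≤ c := div_nonneg (by linarith) hη0.le
  have hfactor : ∀ i, 0 < 1 + c * μ i := fun i ↦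
    add_pos_of_pos_of_nonneg one_pos (mul_nonneg hc (eigenvalues_self_mul_conjTranspose_nonneg A i))
  have htrace : ∑ i, μ i = n := by
    simp [μ, sum_eigenvalues_mul_conjTranspose_self, ← Complex.normSq_eq_norm_sq, hrows]
  have hsum : ∑ i, (1 + c * μ i) = n * (1 / η) := by
    rw [sum_add_distrib, ← mul_sum, htrace, sum_const, card_fin, nsmul_one]
    simp only [c]
    field_simp
    ring
  have hamgm : ∏ i, (1 + c * μ i) ≤ (1 / η) ^ n := by
    have := Real.prod_le_pow_card_of_sum_le (s := univ) (fun i _ ↦ (hfactor i).le)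
      (by rw [card_fin, hsum])
    rwa [card_fin] at this
  have hdet : (1 + (c : ℂ) • (Aᴴ * A)).det.re = ∏ i, (1 + c * μ i) :=
    congrArg Complex.re (det_one_add_smul_conjTranspose_mul_self A c)
  rw [hdet, ← Real.logb_pow]
  exact Real.logb_le_logb_of_le (by norm_num) (prod_pos fun i _ ↦ hfactor i) hamgm
end
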